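/- Let P, Q be PMFs on a countable type Ω such that D_α(P‖Q) ≤ max(1 − α, 0) for all real α ≥ 0. Then there exists ω ∈ Ω with P(ω) > 0 and P(ω) = Q(ω); that is, 0 belongs to the support of the privacy loss distribution of (P, Q). -/

import Mathlib

/-- The α-hockey-stick divergence between two PMFs. -/
noncomputable def hsDiv {Ω : Type*} (α : ℝ) (P Q : PMF Ω) : ℝ :=
  ∑' ω, max ((P ω).toReal - α * (Q ω).toReal) 0

/-! Taking `α = 1` in the hypothesis gives `∑ max (P ω - Q ω) 0 ≤ 0`, so `P ≤ Q` pointwise; two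
probability distributions can only be ordered pointwise if they coincide, so `P = Q`, and any
point of the (nonempty) support of `P` is a witness. -/

theorem PMF.summable_toReal {Ω : Type*} (P : PMF Ω) : Summable fun ω => (P ω).toReal :=
  ENNReal.summable_toReal (P.tsum_coe ▸ ENNReal.one_ne_top)

theorem PMF.eq_of_forall_le {Ω : Type*} {P Q : PMF Ω} (hle : ∀ ω, P ω ≤ Q ω) : P = Q := by
  ext ω
  refine (hle ω).eq_or_lt.resolve_right fun hlt => ?_
  have : ∑' ω, P ω < ∑' ω, Q ω :=
    ENNReal.tsum_lt_tsum (P.tsum_coe ▸ ENNReal.one_ne_top) hle hlt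
  simp [PMF.tsum_coe] at this

theorem summable_hsDiv_term {Ω : Type*} {α : ℝ} (hα : 0 ≤ α) (P Q : PMF Ω) :
    Summable fun ω => max ((P ω).toReal - α * (Q ω).toReal) 0 :=
  P.summable_toReal.of_nonneg_of_le (fun _ => le_max_right _ _) fun ω =>
    max_le (sub_le_self _ (by positivity)) ENNReal.toReal_nonneg

theorem le_of_hsDiv_one_nonpos {Ω : Type*} {P Q : PMF Ω} (h : hsDiv 1 P Q ≤ 0) (ω : Ω) :
    P ω ≤ Q ω := by
  have hterm : max ((P ω).toReal - 1 * (Q ω).toReal) 0 ≤ hsDiv 1 P Q :=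
    (summable_hsDiv_term zero_le_one P Q).le_tsum ω fun _ _ => le_max_right _ _
  have hreal : (P ω).toReal ≤ (Q ω).toReal := by
    linarith [le_max_left ((P ω).toReal - 1 * (Q ω).toReal) 0]
  exact (ENNReal.toReal_le_toReal (P.apply_ne_top ω) (Q.apply_ne_top ω)).mp hreal

theorem zero_in_support_of_dominated_general {Ω : Type*} (P Q : PMF Ω)
    (hdom : ∀ α : ℝ, 0 ≤ α → hsDiv α P Q ≤ max (1 - α) 0) :
    ∃ ω, 0 < P ω ∧ P ω = Q ω := by
  have hone : hsDiv 1 P Q ≤ 0 := by simpa using hdom 1 zero_le_one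
  have hPQ : P = Q := PMF.eq_of_forall_le (le_of_hsDiv_one_nonpos hone)
  obtain ⟨ω, hω⟩ := P.support_nonempty
  exact ⟨ω, pos_iff_ne_zero.mpr hω, hPQ ▸ rfl⟩

/-- If `(P, Q)` is dominated by a pair with hockey-stick curve `α ↦ max (1 - α) 0`
(the curve of any pair `(A, A)`), then `0` must belong to the support of the privacy
loss distribution of `(P, Q)`: there is some outcome with `P(ω) > 0` and
`P(ω) = Q(ω)`. -/
theorem zero_in_support_of_dominated {Ω : Type*} [Countable Ω] (P Q : PMF Ω)
    (hdom : ∀ α : ℝ, 0 ≤ α → hsDiv α P Q ≤ max (1 - α) 0) :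
    ∃ ω, 0 < P ω ∧ P ω = Q ω :=
  zero_in_support_of_dominated_general P Q hdom
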